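/- For a behavior tree with root 0, the operating regions of all leaves form a partition of the operating region Ω0 of the root (i.e., the leaf operating regions are pairwise disjoint and their union equals Ω0). -/
import Mathlib


/-- Return status of a behavior tree: Running, Success, or Failure. -/
inductive BTStatus where
  | Run | Succ | Fail
deriving DecidableEq

/-- Direction to a child in a binary interior node. -/
inductive BTDir where
  | left | right
deriving DecidableEq

/-- Behavior trees: leaves carry a controller `u : X → U` and a return-status
function `r : X → {R, S, F}`; interior nodes are binary Sequence and Fallback. -/
inductive BTree (X U : Type*) where
  | leaf (u : X → U) (r : X → BTStatus)
  | seq (t1 t2 : BTree X U)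
  | fall (t1 t2 : BTree X U)

namespace BTree
variable {X U : Type*}

/-- Return-status function of a tree (Sequence: run second child iff first
succeeds; Fallback: run second child iff first fails). -/
def ret : BTree X U → X → BTStatus
  | .leaf _ r, x => r x
  | .seq t1 t2, x => if t1.ret x = .Succ then t2.ret x else t1.ret x
  | .fall t1 t2, x => if t1.ret x = .Fail then t2.ret x else t1.ret x

/-- Controller of a tree. -/
def ctrl : BTree X U → X → U
  | .leaf u _, x => u x
  | .seq t1 t2, x => if t1.ret x = .Succ then t2.ctrl x else t1.ctrl x
  | .fall t1 t2, x => if t1.ret x = .Fail then t2.ctrl x else t1.ctrl x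

/-- Success region. -/
def Sreg (t : BTree X U) : Set X := {x | t.ret x = .Succ}
/-- Failure region. -/
def Freg (t : BTree X U) : Set X := {x | t.ret x = .Fail}
/-- Running region. -/
def Rreg (t : BTree X U) : Set X := {x | t.ret x = .Run}

/-- The subtree at a given path (if the path is valid). -/
def sub : BTree X U → List BTDir → Option (BTree X U)
  | t, [] => some t
  | .leaf _ _, _ :: _ => none
  | .seq t1 _, .left :: p => t1.sub p
  | .seq _ t2, .right :: p => t2.sub p
  | .fall t1 _, .left :: p => t1.sub p
  | .fall _ t2, .right :: p => t2.sub p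

/-- Influence region of the subtree at a path, given the influence region `I0`
of the root: the leftmost child inherits its parent's influence region; a right
child of a Sequence (resp. Fallback) gets its left sibling's influence region
intersected with the sibling's success (resp. failure) region. -/
def infl : BTree X U → Set X → List BTDir → Set X
  | _, I0, [] => I0
  | .leaf _ _, I0, _ :: _ => I0
  | .seq t1 _, I0, .left :: p => t1.infl I0 p
  | .seq t1 t2, I0, .right :: p => t2.infl (I0 ∩ t1.Sreg) p
  | .fall t1 _, I0, .left :: p => t1.infl I0 p
  | .fall t1 t2, I0, .right :: p => t2.infl (I0 ∩ t1.Freg) p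

/-- Operating region `Ωᵢ = Iᵢ ∩ Rᵢ` of the subtree at a path (root influence
region `I0 = X`); empty for an invalid path. -/
def opReg (t : BTree X U) (p : List BTDir) : Set X :=
  match t.sub p with
  | some s => t.infl Set.univ p ∩ s.Rreg
  | none => ∅

/-- Paths to all the leaves of a tree. -/
def leafPaths : BTree X U → List (List BTDir)
  | .leaf _ _ => [[]]
  | .seq t1 t2 => t1.leafPaths.map (.left :: ·) ++ t2.leafPaths.map (.right :: ·)
  | .fall t1 t2 => t1.leafPaths.map (.left :: ·) ++ t2.leafPaths.map (.right :: ·)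

/-- Operating region with a general root influence region. -/
def opRegI (t : BTree X U) (I : Set X) (p : List BTDir) : Set X :=
  match t.sub p with
  | some s => t.infl I p ∩ s.Rreg
  | none => ∅

lemma Rreg_seq (t1 t2 : BTree X U) :
    (BTree.seq t1 t2).Rreg = t1.Rreg ∪ (t1.Sreg ∩ t2.Rreg) := by
  ext x
  simp only [Rreg, Sreg, ret, Set.mem_setOf_eq, Set.mem_union, Set.mem_inter_iff,
    Set.mem_setOf_eq]
  cases h : t1.ret x <;> simp [h]

lemma Rreg_fall (t1 t2 : BTree X U) :
    (BTree.fall t1 t2).Rreg = t1.Rreg ∪ (t1.Freg ∩ t2.Rreg) := by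
  ext x
  simp only [Rreg, Freg, ret, Set.mem_setOf_eq, Set.mem_union, Set.mem_inter_iff,
    Set.mem_setOf_eq]
  cases h : t1.ret x <;> simp [h]

lemma opRegI_seq_left (t1 t2 : BTree X U) (I : Set X) (p : List BTDir) :
    (BTree.seq t1 t2).opRegI I (.left :: p) = t1.opRegI I p := rfl

lemma opRegI_seq_right (t1 t2 : BTree X U) (I : Set X) (p : List BTDir) :
    (BTree.seq t1 t2).opRegI I (.right :: p) = t2.opRegI (I ∩ t1.Sreg) p := rfl

lemma opRegI_fall_left (t1 t2 : BTree X U) (I : Set X) (p : List BTDir) :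
    (BTree.fall t1 t2).opRegI I (.left :: p) = t1.opRegI I p := rfl

lemma opRegI_fall_right (t1 t2 : BTree X U) (I : Set X) (p : List BTDir) :
    (BTree.fall t1 t2).opRegI I (.right :: p) = t2.opRegI (I ∩ t1.Freg) p := rfl

lemma opRegI_union (t : BTree X U) (I : Set X) :
    (⋃ p ∈ t.leafPaths, t.opRegI I p) = I ∩ t.Rreg := by
  induction t generalizing I with
  | leaf u r => simp [leafPaths, opRegI, sub, infl]
  | seq t1 t2 ih1 ih2 =>
    ext x
    simp only [leafPaths, List.mem_append, List.mem_map, Set.mem_iUnion, Rreg_seq,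
      Set.mem_inter_iff, Set.mem_union]
    constructor
    · rintro ⟨p, (⟨p', hp', rfl⟩ | ⟨p', hp', rfl⟩), hx⟩
      · rw [opRegI_seq_left] at hx
        have : x ∈ I ∩ t1.Rreg := by rw [← ih1 I]; exact Set.mem_biUnion hp' hx
        exact ⟨this.1, Or.inl this.2⟩
      · rw [opRegI_seq_right] at hx
        have : x ∈ (I ∩ t1.Sreg) ∩ t2.Rreg := by
          rw [← ih2 (I ∩ t1.Sreg)]; exact Set.mem_biUnion hp' hx
        exact ⟨this.1.1, Or.inr ⟨this.1.2, this.2⟩⟩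
    · rintro ⟨hI, (hR | ⟨hS, hR⟩)⟩
      · have : x ∈ ⋃ p ∈ t1.leafPaths, t1.opRegI I p := by rw [ih1]; exact ⟨hI, hR⟩
        obtain ⟨p, hp, hx⟩ := Set.mem_iUnion₂.mp this
        exact ⟨.left :: p, Or.inl ⟨p, hp, rfl⟩, by rw [opRegI_seq_left]; exact hx⟩
      · have : x ∈ ⋃ p ∈ t2.leafPaths, t2.opRegI (I ∩ t1.Sreg) p := by
          rw [ih2]; exact ⟨⟨hI, hS⟩, hR⟩
        obtain ⟨p, hp, hx⟩ := Set.mem_iUnion₂.mp this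
        exact ⟨.right :: p, Or.inr ⟨p, hp, rfl⟩, by rw [opRegI_seq_right]; exact hx⟩
  | fall t1 t2 ih1 ih2 =>
    ext x
    simp only [leafPaths, List.mem_append, List.mem_map, Set.mem_iUnion, Rreg_fall,
      Set.mem_inter_iff, Set.mem_union]
    constructor
    · rintro ⟨p, (⟨p', hp', rfl⟩ | ⟨p', hp', rfl⟩), hx⟩
      · rw [opRegI_fall_left] at hx
        have : x ∈ I ∩ t1.Rreg := by rw [← ih1 I]; exact Set.mem_biUnion hp' hx
        exact ⟨this.1, Or.inl this.2⟩
      · rw [opRegI_fall_right] at hx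
        have : x ∈ (I ∩ t1.Freg) ∩ t2.Rreg := by
          rw [← ih2 (I ∩ t1.Freg)]; exact Set.mem_biUnion hp' hx
        exact ⟨this.1.1, Or.inr ⟨this.1.2, this.2⟩⟩
    · rintro ⟨hI, (hR | ⟨hS, hR⟩)⟩
      · have : x ∈ ⋃ p ∈ t1.leafPaths, t1.opRegI I p := by rw [ih1]; exact ⟨hI, hR⟩
        obtain ⟨p, hp, hx⟩ := Set.mem_iUnion₂.mp this
        exact ⟨.left :: p, Or.inl ⟨p, hp, rfl⟩, by rw [opRegI_fall_left]; exact hx⟩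
      · have : x ∈ ⋃ p ∈ t2.leafPaths, t2.opRegI (I ∩ t1.Freg) p := by
          rw [ih2]; exact ⟨⟨hI, hS⟩, hR⟩
        obtain ⟨p, hp, hx⟩ := Set.mem_iUnion₂.mp this
        exact ⟨.right :: p, Or.inr ⟨p, hp, rfl⟩, by rw [opRegI_fall_right]; exact hx⟩

lemma opRegI_subset (t : BTree X U) (I : Set X) {p : List BTDir}
    (hp : p ∈ t.leafPaths) : t.opRegI I p ⊆ I ∩ t.Rreg := by
  rw [← opRegI_union t I]
  exact Set.subset_biUnion_of_mem hp

lemma opRegI_disj (t : BTree X U) (I : Set X) :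
    ∀ p ∈ t.leafPaths, ∀ q ∈ t.leafPaths, p ≠ q → t.opRegI I p ∩ t.opRegI I q = ∅ := by
  induction t generalizing I with
  | leaf u r => intro p hp q hq hne; simp [leafPaths] at hp hq; subst hp; subst hq
                exact absurd rfl hne
  | seq t1 t2 ih1 ih2 =>
    intro p hp q hq hne
    simp only [leafPaths, List.mem_append, List.mem_map] at hp hq
    obtain ⟨p', hp', rfl⟩ | ⟨p', hp', rfl⟩ := hp <;>
      obtain ⟨q', hq', rfl⟩ | ⟨q', hq', rfl⟩ := hq
    · rw [opRegI_seq_left, opRegI_seq_left]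
      exact ih1 I p' hp' q' hq' (by rintro rfl; exact hne rfl)
    · rw [opRegI_seq_left, opRegI_seq_right]
      apply Set.eq_empty_of_subset_empty
      intro x ⟨hx1, hx2⟩
      have h1 := (opRegI_subset t1 I hp' hx1).2
      have h2 := ((opRegI_subset t2 (I ∩ t1.Sreg) hq' hx2).1).2
      simp [Rreg, Sreg] at h1 h2; rw [h1] at h2; exact absurd h2 (by decide)
    · rw [opRegI_seq_right, opRegI_seq_left]
      apply Set.eq_empty_of_subset_empty
      intro x ⟨hx1, hx2⟩
      have h1 := ((opRegI_subset t2 (I ∩ t1.Sreg) hp' hx1).1).2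
      have h2 := (opRegI_subset t1 I hq' hx2).2
      simp [Rreg, Sreg] at h1 h2; rw [h1] at h2; exact absurd h2 (by decide)
    · rw [opRegI_seq_right, opRegI_seq_right]
      exact ih2 (I ∩ t1.Sreg) p' hp' q' hq' (by rintro rfl; exact hne rfl)
  | fall t1 t2 ih1 ih2 =>
    intro p hp q hq hne
    simp only [leafPaths, List.mem_append, List.mem_map] at hp hq
    obtain ⟨p', hp', rfl⟩ | ⟨p', hp', rfl⟩ := hp <;>
      obtain ⟨q', hq', rfl⟩ | ⟨q', hq', rfl⟩ := hq
    · rw [opRegI_fall_left, opRegI_fall_left]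
      exact ih1 I p' hp' q' hq' (by rintro rfl; exact hne rfl)
    · rw [opRegI_fall_left, opRegI_fall_right]
      apply Set.eq_empty_of_subset_empty
      intro x ⟨hx1, hx2⟩
      have h1 := (opRegI_subset t1 I hp' hx1).2
      have h2 := ((opRegI_subset t2 (I ∩ t1.Freg) hq' hx2).1).2
      simp [Rreg, Freg] at h1 h2; rw [h1] at h2; exact absurd h2 (by decide)
    · rw [opRegI_fall_right, opRegI_fall_left]
      apply Set.eq_empty_of_subset_empty
      intro x ⟨hx1, hx2⟩
      have h1 := ((opRegI_subset t2 (I ∩ t1.Freg) hp' hx1).1).2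
      have h2 := (opRegI_subset t1 I hq' hx2).2
      simp [Rreg, Freg] at h1 h2; rw [h1] at h2; exact absurd h2 (by decide)
    · rw [opRegI_fall_right, opRegI_fall_right]
      exact ih2 (I ∩ t1.Freg) p' hp' q' hq' (by rintro rfl; exact hne rfl)

lemma opReg_eq_opRegI (t : BTree X U) (p : List BTDir) :
    t.opReg p = t.opRegI Set.univ p := rfl

end BTree

/-- the operating regions of the leaves of a behavior tree are
pairwise disjoint and their union is the operating region `Ω0` of the root. -/
theorem leaf_opRegs_partition_root {X U : Type*} (t : BTree X U) :
    (∀ p ∈ t.leafPaths, ∀ q ∈ t.leafPaths, p ≠ q → t.opReg p ∩ t.opReg q = ∅) ∧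
    (⋃ p ∈ t.leafPaths, t.opReg p) = t.opReg [] := by
  constructor
  · intro p hp q hq hne
    rw [BTree.opReg_eq_opRegI, BTree.opReg_eq_opRegI]
    exact BTree.opRegI_disj t Set.univ p hp q hq hne
  · have h := BTree.opRegI_union t Set.univ
    simp only [← BTree.opReg_eq_opRegI] at h
    rw [h, BTree.opReg_eq_opRegI]
    simp [BTree.opRegI, BTree.sub, BTree.infl]
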